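/- Suppose σ, σ' and σ'' are differentiable on ℝ. For each k0 : Fin m2 and all x t : ℝ, the derivative with respect to the second-layer bias B2 k0 of the second spatial derivative of the network output satisfies deriv (fun s ↦ deriv (deriv (fun ξ ↦ (∑ k, σ ((∑ j, σ (h1 j ξ t) * W2 j k) + Function.update B2 k0 s k) * W3 k) + B3)) x) (B2 k0) = (σ''' (h2 k0 x t) * (∑ j, σ' (h1 j x t) * W1 0 j * W2 j k0)^2 + σ'' (h2 k0 x t) * (∑ j, σ'' (h1 j x t) * (W1 0 j)^2 * W2 j k0)) * W3 k0. -/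

import Mathlib

/-!
Differentiating `ũ` twice in `x` is the second-order chain rule applied to each layer
`ξ ↦ ∑ i, σ (f i ξ) * w i`, giving `∑ k, (σ''(h2 k) * (∂ₓh2 k)² + σ'(h2 k) * ∂ₓ²h2 k) * W3 k`.
Only the `k0`-th summand depends on `B2 k0`, and there `B2 k0` enters through `h2 k0` alone,
so one more chain rule produces the factor `σ'''`.
-/

variable {𝕜 : Type*} [NontriviallyNormedField 𝕜]

theorem deriv_deriv_eq_of_hasDerivAt {E : Type*} [NormedAddCommGroup E] [NormedSpace 𝕜 E]
    {u u' : 𝕜 → E} {u'' : E} {x : 𝕜}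
    (hu : ∀ ξ, HasDerivAt u (u' ξ) ξ) (hu' : HasDerivAt u' u'' x) :
    deriv (deriv u) x = u'' := by
  rw [funext fun ξ => (hu ξ).deriv]
  exact hu'.deriv

theorem deriv_sum_apply_update {ι E : Type*} [Fintype ι] [DecidableEq ι]
    [NormedAddCommGroup E] [NormedSpace 𝕜 E] (F : ι → 𝕜 → E) (b : ι → 𝕜) (i : ι) (y : 𝕜) :
    deriv (fun s => ∑ k, F k (Function.update b i s k)) y = deriv (F i) y := by
  simp only [Function.apply_update F b i, Finset.sum_update_of_mem (Finset.mem_univ i)]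
  exact deriv_add_const _

section Layer

variable {ι : Type*} [Fintype ι] {σ : 𝕜 → 𝕜} {f : ι → 𝕜 → 𝕜} {w : ι → 𝕜} {x : 𝕜}

theorem hasDerivAt_sum_comp_mul {f' : ι → 𝕜} (hσ : ∀ i, DifferentiableAt 𝕜 σ (f i x))
    (hf : ∀ i, HasDerivAt (f i) (f' i) x) :
    HasDerivAt (fun ξ => ∑ i, σ (f i ξ) * w i) (∑ i, deriv σ (f i x) * f' i * w i) x :=
  HasDerivAt.fun_sum fun i _ => ((hσ i).hasDerivAt.comp x (hf i)).mul_const (w i)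

theorem hasDerivAt_sum_deriv_comp_mul {f' : ι → 𝕜 → 𝕜} {f'' : ι → 𝕜}
    (hσ' : ∀ i, DifferentiableAt 𝕜 (deriv σ) (f i x)) (hf : ∀ i, HasDerivAt (f i) (f' i x) x)
    (hf' : ∀ i, HasDerivAt (f' i) (f'' i) x) :
    HasDerivAt (fun ξ => ∑ i, deriv σ (f i ξ) * f' i ξ * w i)
      (∑ i, (deriv (deriv σ) (f i x) * f' i x ^ 2 + deriv σ (f i x) * f'' i) * w i) x := by
  refine HasDerivAt.fun_sum fun i _ => ?_
  refine ((((hσ' i).hasDerivAt.comp x (hf i)).mul (hf' i)).mul_const (w i)).congr_deriv ?_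
  rw [Function.comp_apply]
  ring

end Layer

theorem stmt_19 (m1 m2 : ℕ) (σ : ℝ → ℝ)
    (hσ : Differentiable ℝ σ) (hσ' : Differentiable ℝ (deriv σ))
    (hσ'' : Differentiable ℝ (deriv (deriv σ)))
    (W1 : Fin 2 → Fin m1 → ℝ) (B1 : Fin m1 → ℝ)
    (W2 : Fin m1 → Fin m2 → ℝ) (B2 : Fin m2 → ℝ)
    (W3 : Fin m2 → ℝ) (B3 : ℝ)
    (h1 : Fin m1 → ℝ → ℝ → ℝ)
    (hh1 : h1 = fun j x t => x * W1 0 j + t * W1 1 j + B1 j)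
    (h2 : Fin m2 → ℝ → ℝ → ℝ)
    (hh2 : h2 = fun k x t => (∑ j, σ (h1 j x t) * W2 j k) + B2 k) :
    ∀ (k0 : Fin m2) (x t : ℝ),
      deriv (fun s => deriv (deriv (fun ξ =>
          (∑ k, σ ((∑ j, σ (h1 j ξ t) * W2 j k) + Function.update B2 k0 s k) * W3 k) + B3)) x)
        (B2 k0) =
        (deriv (deriv (deriv σ)) (h2 k0 x t)
            * (∑ j, deriv σ (h1 j x t) * W1 0 j * W2 j k0) ^ 2
          + deriv (deriv σ) (h2 k0 x t)
            * (∑ j, deriv (deriv σ) (h1 j x t) * (W1 0 j) ^ 2 * W2 j k0)) * W3 k0 := by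
  intro k0 x t
  have hh1_deriv (j : Fin m1) (ξ : ℝ) : HasDerivAt (fun ξ => h1 j ξ t) (W1 0 j) ξ := by
    subst hh1
    simpa using ((hasDerivAt_id ξ).mul_const (W1 0 j)).add_const (t * W1 1 j + B1 j)
  have hH (k : Fin m2) (ξ : ℝ) : HasDerivAt (fun ξ => ∑ j, σ (h1 j ξ t) * W2 j k)
      (∑ j, deriv σ (h1 j ξ t) * W1 0 j * W2 j k) ξ :=
    hasDerivAt_sum_comp_mul (fun _ => hσ _) (fun j => hh1_deriv j ξ)
  have hH' (k : Fin m2) : HasDerivAt (fun ξ => ∑ j, deriv σ (h1 j ξ t) * W1 0 j * W2 j k)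
      (∑ j, deriv (deriv σ) (h1 j x t) * W1 0 j ^ 2 * W2 j k) x := by
    simpa using hasDerivAt_sum_deriv_comp_mul (f' := fun j _ => W1 0 j) (f'' := 0)
      (w := (W2 · k)) (fun _ => hσ' _) (fun j => hh1_deriv j x)
      (fun j => hasDerivAt_const x (W1 0 j))
  have hu'' (s : ℝ) := deriv_deriv_eq_of_hasDerivAt
    (fun ξ => (hasDerivAt_sum_comp_mul (w := W3) (fun _ => hσ _)
      fun k => (hH k ξ).add_const (Function.update B2 k0 s k)).add_const B3)
    (hasDerivAt_sum_deriv_comp_mul (fun _ => hσ' _) (fun k => (hH k x).add_const _) hH')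
  rw [funext hu'', deriv_sum_apply_update (fun k s =>
    (deriv (deriv σ) ((∑ j, σ (h1 j x t) * W2 j k) + s)
        * (∑ j, deriv σ (h1 j x t) * W1 0 j * W2 j k) ^ 2
      + deriv σ ((∑ j, σ (h1 j x t) * W2 j k) + s)
        * (∑ j, deriv (deriv σ) (h1 j x t) * W1 0 j ^ 2 * W2 j k)) * W3 k)]
  subst hh2
  exact ((((hσ'' _).hasDerivAt.comp_const_add _ _).mul_const _).add
    (((hσ' _).hasDerivAt.comp_const_add _ _).mul_const _)).mul_const _ |>.deriv
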